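/- Let E be a real inner product space and let f⁰, f¹ : E → ℝ both be L-smooth for some L ≥ 0. Fix ω ∈ E with ∇₀ := ‖∇f⁰(ω)‖ > 0 and ∇₁ := ‖∇f¹(ω)‖ > 0, set c = ⟨∇f⁰(ω), ∇f¹(ω)⟩, cos θ = c/(∇₀∇₁), S = ‖∇f⁰(ω) + ∇f¹(ω)‖², and assume S > 0. Let η > 0 satisfy ηL ≤ 2(min(∇₀², ∇₁²) + c)/S, let n₀, n₁ > 0 be the class sizes, let r = ∇₀/∇₁, and set ω' = ω − η(∇f⁰(ω) + ∇f¹(ω)). Then the speed gap Δ := (f⁰(ω) − f⁰(ω'))/n₀ − (f¹(ω) − f¹(ω'))/n₁ satisfies Δ ≤ (η∇₁²/n₀)·(r² + 2r·cos θ + 1). -/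

import Mathlib

/-!
Along the segment `t ↦ x + t • v`, an `L`-Lipschitz gradient keeps the slope of `f` within
`L t ‖v‖²` of its initial value, so `f (x + v)` deviates from its first-order Taylor
approximation by at most `L ‖v‖² / 2`. Applied to the step `ω' = ω - η (∇f⁰ + ∇f¹)`, the step-size
condition makes this error at most `η (min (∇₀², ∇₁²) + c)`. Hence the outlier loss cannot
increase, while the inlier loss decreases by at most `η (∇₀² + c) + η (∇₁² + c) = η S`; and
`η S = η ∇₁² (r² + 2 r cos θ + 1)`.
-/

open RealInnerProductSpace

section Smooth

variable {E : Type*} [NormedAddCommGroup E] [InnerProductSpace ℝ E] [CompleteSpace E]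
  {f : E → ℝ} {L : ℝ}

theorem abs_sub_sub_inner_gradient_le (hf : Differentiable ℝ f)
    (hlip : ∀ x y : E, ‖gradient f x - gradient f y‖ ≤ L * ‖x - y‖) (x v : E) :
    |f (x + v) - f x - ⟪gradient f x, v⟫| ≤ L / 2 * ‖v‖ ^ 2 := by
  set φ : ℝ → ℝ := fun t => f (x + t • v) - f x - t * ⟪gradient f x, v⟫
  have hφ (t : ℝ) : HasDerivAt φ ⟪gradient f (x + t • v) - gradient f x, v⟫ t := by
    have hline : HasDerivAt (fun t : ℝ => x + t • v) v t := by
      simpa using ((hasDerivAt_id t).smul_const v).const_add x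
    have hcomp := (hf (x + t • v)).hasGradientAt.hasFDerivAt.comp_hasDerivAt t hline
    exact ((hcomp.sub_const (f x)).sub ((hasDerivAt_id t).mul_const _)).congr_deriv
      (by simp [inner_sub_left])
  have hB (t : ℝ) : HasDerivAt (fun t => L / 2 * ‖v‖ ^ 2 * t ^ 2) (L * ‖v‖ ^ 2 * t) t :=
    ((hasDerivAt_pow 2 t).const_mul _).congr_deriv (by push_cast; ring)
  have bound : ∀ t ∈ Set.Ico (0 : ℝ) 1,
      ‖⟪gradient f (x + t • v) - gradient f x, v⟫‖ ≤ L * ‖v‖ ^ 2 * t := by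
    intro t ht
    calc ‖⟪gradient f (x + t • v) - gradient f x, v⟫‖
        ≤ ‖gradient f (x + t • v) - gradient f x‖ * ‖v‖ := norm_inner_le_norm _ _
      _ ≤ L * ‖x + t • v - x‖ * ‖v‖ := by gcongr; exact hlip _ _
      _ = L * ‖v‖ ^ 2 * t := by
        rw [add_sub_cancel_left, norm_smul, Real.norm_of_nonneg ht.1]; ring
  have := image_norm_le_of_norm_deriv_right_le_deriv_boundary
    (fun t _ => (hφ t).continuousAt.continuousWithinAt) (fun t _ => (hφ t).hasDerivWithinAt)
    (by simp [φ]) hB bound (x := 1) ⟨zero_le_one, le_rfl⟩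
  simpa [φ] using this

theorem abs_sub_gradient_step_sub_le (hf : Differentiable ℝ f)
    (hlip : ∀ x y : E, ‖gradient f x - gradient f y‖ ≤ L * ‖x - y‖) (x d : E) (η : ℝ) :
    |f x - f (x - η • d) - η * ⟪gradient f x, d⟫| ≤ L / 2 * (η ^ 2 * ‖d‖ ^ 2) := by
  have := abs_sub_sub_inner_gradient_le hf hlip x (-(η • d))
  rw [← sub_eq_add_neg, inner_neg_right, real_inner_smul_right, norm_neg, norm_smul,
    Real.norm_eq_abs, mul_pow, sq_abs, ← abs_neg] at this
  convert this using 2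
  ring

end Smooth

theorem norm_add_sq_eq_norm_sq_mul_ratio {E : Type*} [NormedAddCommGroup E]
    [InnerProductSpace ℝ E] {u w : E} (hu : u ≠ 0) (hw : w ≠ 0) :
    ‖u + w‖ ^ 2 = ‖w‖ ^ 2 *
      ((‖u‖ / ‖w‖) ^ 2 + 2 * (‖u‖ / ‖w‖) * (⟪u, w⟫ / (‖u‖ * ‖w‖)) + 1) := by
  have hu' : ‖u‖ ≠ 0 := norm_ne_zero_iff.mpr hu
  have hw' : ‖w‖ ≠ 0 := norm_ne_zero_iff.mpr hw
  rw [norm_add_sq_real]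
  field_simp

theorem speed_gap_upper_bound_general {E : Type*} [NormedAddCommGroup E]
    [InnerProductSpace ℝ E] [CompleteSpace E]
    (f0 f1 : E → ℝ) (hf0 : Differentiable ℝ f0) (hf1 : Differentiable ℝ f1)
    (L : ℝ)
    (h0 : ∀ x y : E, ‖gradient f0 x - gradient f0 y‖ ≤ L * ‖x - y‖)
    (h1 : ∀ x y : E, ‖gradient f1 x - gradient f1 y‖ ≤ L * ‖x - y‖)
    (ω : E)
    (hg0 : 0 < ‖gradient f0 ω‖) (hg1 : 0 < ‖gradient f1 ω‖)
    (hS : 0 < ‖gradient f0 ω + gradient f1 ω‖ ^ 2)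
    (η : ℝ) (hη : 0 < η)
    (hηL : η * L ≤
      2 * (min (‖gradient f0 ω‖ ^ 2) (‖gradient f1 ω‖ ^ 2) +
          ⟪gradient f0 ω, gradient f1 ω⟫) /
        ‖gradient f0 ω + gradient f1 ω‖ ^ 2)
    (n0 n1 : ℝ) (hn0 : 0 < n0) (hn1 : 0 < n1)
    (ω' : E) (hω' : ω' = ω - η • (gradient f0 ω + gradient f1 ω)) :
    (f0 ω - f0 ω') / n0 - (f1 ω - f1 ω') / n1 ≤
      η * ‖gradient f1 ω‖ ^ 2 / n0 *
        ((‖gradient f0 ω‖ / ‖gradient f1 ω‖) ^ 2 +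
          2 * (‖gradient f0 ω‖ / ‖gradient f1 ω‖) *
            (⟪gradient f0 ω, gradient f1 ω⟫ /
              (‖gradient f0 ω‖ * ‖gradient f1 ω‖)) + 1) := by
  subst hω'
  set g0 := gradient f0 ω
  set g1 := gradient f1 ω
  have hstep : L / 2 * (η ^ 2 * ‖g0 + g1‖ ^ 2) ≤ η * (min (‖g0‖ ^ 2) (‖g1‖ ^ 2) + ⟪g0, g1⟫) := by
    linarith [mul_le_mul_of_nonneg_left ((le_div_iff₀ hS).mp hηL) hη.le]
  have hinner0 : ⟪g0, g0 + g1⟫ = ‖g0‖ ^ 2 + ⟪g0, g1⟫ := by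
    rw [inner_add_right, real_inner_self_eq_norm_sq]
  have hinner1 : ⟪g1, g0 + g1⟫ = ⟪g0, g1⟫ + ‖g1‖ ^ 2 := by
    rw [inner_add_right, real_inner_self_eq_norm_sq, real_inner_comm]
  have hdec0 : f0 ω - f0 (ω - η • (g0 + g1)) ≤ η * ‖g0 + g1‖ ^ 2 := by
    have := (abs_le.mp (abs_sub_gradient_step_sub_le hf0 h0 ω (g0 + g1) η)).2
    rw [hinner0] at this
    rw [norm_add_sq_real]
    linarith [mul_le_mul_of_nonneg_left (min_le_right (‖g0‖ ^ 2) (‖g1‖ ^ 2)) hη.le]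
  have hdec1 : 0 ≤ f1 ω - f1 (ω - η • (g0 + g1)) := by
    have := (abs_le.mp (abs_sub_gradient_step_sub_le hf1 h1 ω (g0 + g1) η)).1
    rw [hinner1] at this
    linarith [mul_le_mul_of_nonneg_left (min_le_right (‖g0‖ ^ 2) (‖g1‖ ^ 2)) hη.le]
  calc _ ≤ (f0 ω - f0 (ω - η • (g0 + g1))) / n0 := sub_le_self _ (div_nonneg hdec1 hn1.le)
    _ ≤ η * ‖g0 + g1‖ ^ 2 / n0 := by gcongr
    _ = _ := by
      rw [norm_add_sq_eq_norm_sq_mul_ratio (norm_pos_iff.mp hg0) (norm_pos_iff.mp hg1)]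
      ring

/-- The paper's upper bound (Eq. (20)) on the speed gap
`Δ = (f⁰(ω) - f⁰(ω'))/n₀ - (f¹(ω) - f¹(ω'))/n₁` under one gradient-descent step:
`Δ ≤ (η∇₁²/n₀)(r² + 2r·cos θ + 1)`. -/
theorem speed_gap_upper_bound {E : Type*} [NormedAddCommGroup E]
    [InnerProductSpace ℝ E] [CompleteSpace E]
    (f0 f1 : E → ℝ) (hf0 : Differentiable ℝ f0) (hf1 : Differentiable ℝ f1)
    (L : ℝ) (hL : 0 ≤ L)
    (h0 : ∀ x y : E, ‖gradient f0 x - gradient f0 y‖ ≤ L * ‖x - y‖)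
    (h1 : ∀ x y : E, ‖gradient f1 x - gradient f1 y‖ ≤ L * ‖x - y‖)
    (ω : E)
    (hg0 : 0 < ‖gradient f0 ω‖) (hg1 : 0 < ‖gradient f1 ω‖)
    (hS : 0 < ‖gradient f0 ω + gradient f1 ω‖ ^ 2)
    (η : ℝ) (hη : 0 < η)
    (hηL : η * L ≤
      2 * (min (‖gradient f0 ω‖ ^ 2) (‖gradient f1 ω‖ ^ 2) +
          ⟪gradient f0 ω, gradient f1 ω⟫) /
        ‖gradient f0 ω + gradient f1 ω‖ ^ 2)
    (n0 n1 : ℝ) (hn0 : 0 < n0) (hn1 : 0 < n1)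
    (ω' : E) (hω' : ω' = ω - η • (gradient f0 ω + gradient f1 ω)) :
    (f0 ω - f0 ω') / n0 - (f1 ω - f1 ω') / n1 ≤
      η * ‖gradient f1 ω‖ ^ 2 / n0 *
        ((‖gradient f0 ω‖ / ‖gradient f1 ω‖) ^ 2 +
          2 * (‖gradient f0 ω‖ / ‖gradient f1 ω‖) *
            (⟪gradient f0 ω, gradient f1 ω⟫ /
              (‖gradient f0 ω‖ * ‖gradient f1 ω‖)) + 1) :=
  speed_gap_upper_bound_general f0 f1 hf0 hf1 L h0 h1 ω hg0 hg1 hS η hη hηL n0 n1 hn0 hn1 ω' hω'
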